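/- Fix d ≥ 1, mesh steps Δx_1, …, Δx_d > 0, a time step Δt > 0 and w_∞ ≥ 0 satisfying the strict 1/2-CFL condition w_∞ Σ_{i=1}^d Δt/Δx_i < 1/2. Let (ρ_L)_{L∈ℤ^d} be a summable family of real numbers and let (a_L)_{L∈ℤ^d} be vectors in ℝ^d with |⟨a_L, e_i⟩| ≤ w_∞ for all L and i. Define ρ'_J := ρ_J − Σ_{i=1}^d (Δt/Δx_i)[((a_i)_J)⁺ ρ_J − ((a_i)_{J+e_i})⁻ ρ_{J+e_i} − ((a_i)_{J−e_i})⁺ ρ_{J−e_i} + ((a_i)_J)⁻ ρ_J], where (a_i)_L := ⟨a_L, e_i⟩. Then for every J ∈ ℤ^d, ρ'_J = Σ_{L∈ℤ^d} ρ_L α_J(x_L + Δt a_L). -/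

import Mathlib

open MeasureTheory Real Set
open scoped RealInnerProductSpace ENNReal

noncomputable section

/-- `ℝ^d` with the Euclidean structure. -/
abbrev Euc (d : ℕ) := EuclideanSpace ℝ (Fin d)

open Classical in
/-- `∇̂W`: the gradient of `W` away from `0`, and `0` at `0`. -/
def hatGrad {d : ℕ} (W : Euc d → ℝ) (x : Euc d) : Euc d :=
  if x = 0 then 0 else gradient W x

/-- Positive part `r⁺ = max(r,0)`. -/
def pos (r : ℝ) : ℝ := max r 0

/-- Negative part `r⁻ = max(-r,0)`. -/
def neg (r : ℝ) : ℝ := max (-r) 0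

/-- The node `x_J = (J_1 Δx_1, …, J_d Δx_d)`. -/
def node {d : ℕ} (Δx : Fin d → ℝ) (J : Fin d → ℤ) : Euc d :=
  (EuclideanSpace.equiv (Fin d) ℝ).symm (fun i => (J i : ℝ) * Δx i)

/-- The cell `C_J = Π_i [(J_i - 1/2)Δx_i, (J_i + 1/2)Δx_i)`. -/
def cell {d : ℕ} (Δx : Fin d → ℝ) (J : Fin d → ℤ) : Set (Euc d) :=
  {y | ∀ i, ((J i : ℝ) - 1/2) * Δx i ≤ y i ∧ y i < ((J i : ℝ) + 1/2) * Δx i}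

open Classical in
/-- The interpolation weight `α_J(y)`: since the cells `(C_L)` are pairwise disjoint, at most
one of the summands below is nonzero, and this agrees with the case-by-case definition:
`1 - Σ_i |⟨y - x_J, e_i⟩|/Δx_i` if `y ∈ C_J`; `(⟨y - x_{J∓e_i}, e_i⟩)^±/Δx_i` if
`y ∈ C_{J∓e_i}`; and `0` otherwise. -/
def interpWeight {d : ℕ} (Δx : Fin d → ℝ) (J : Fin d → ℤ) (y : Euc d) : ℝ :=
  (if y ∈ cell Δx J then 1 - ∑ i, |y i - node Δx J i| / Δx i else 0)
    + ∑ i : Fin d,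
      ((if y ∈ cell Δx (J - Pi.single i 1) then
          pos (y i - node Δx (J - Pi.single i 1) i) / Δx i else 0)
        + (if y ∈ cell Δx (J + Pi.single i 1) then
            neg (y i - node Δx (J + Pi.single i 1) i) / Δx i else 0))

/-! The strict 1/2-CFL condition makes each displacement `Δt a_L` shorter than half a mesh
step in every direction, so `x_L + Δt a_L` stays in its own cell `C_L`. Hence
`α_J(x_L + Δt a_L)` vanishes unless `L ∈ {J, J ± e_i}`, the series is a finite sum, and on these
indices the weights are `1 - Σ_i Δt |(a_i)_J| / Δx_i`, `Δt ((a_i)_{J-e_i})⁺ / Δx_i` and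
`Δt ((a_i)_{J+e_i})⁻ / Δx_i`; since `|r| = r⁺ + r⁻` this is the upwind scheme. -/

lemma abs_eq_pos_add_neg (r : ℝ) : |r| = pos r + neg r := by
  rcases le_total 0 r with h | h
  · simp [pos, neg, abs_of_nonneg h, h]
  · simp [pos, neg, abs_of_nonpos h, h]

lemma pos_mul_of_nonneg {t : ℝ} (ht : 0 ≤ t) (r : ℝ) : pos (t * r) = t * pos r := by
  rw [pos, pos, mul_max_of_nonneg _ _ ht, mul_zero]

lemma neg_mul_of_nonneg {t : ℝ} (ht : 0 ≤ t) (r : ℝ) : neg (t * r) = t * neg r := by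
  rw [neg, neg, ← mul_neg, mul_max_of_nonneg _ _ ht, mul_zero]

lemma hasSum_mul_ite_eq {α : Type*} [DecidableEq α] (c : α) (f g : α → ℝ) :
    HasSum (fun L => f L * if L = c then g L else 0) (f c * g c) := by
  simpa using hasSum_single (f := fun L => f L * if L = c then g L else 0) c
    fun L hL => by simp [hL]

section Mesh

variable {d : ℕ} {Δx : Fin d → ℝ}

lemma node_apply (L : Fin d → ℤ) (i : Fin d) : node Δx L i = L i * Δx i := rfl

lemma abs_smul_apply_lt_half_of_cfl (hΔx : ∀ i, 0 < Δx i) {Δt w : ℝ} (hΔt : 0 ≤ Δt)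
    (hCFL : w * ∑ i, Δt / Δx i < 1 / 2) {v : Euc d} (hv : ∀ i, |v i| ≤ w) (i : Fin d) :
    |(Δt • v) i| < Δx i / 2 := by
  have hw : 0 ≤ w := (abs_nonneg _).trans (hv i)
  have hterm : w * (Δt / Δx i) < 1 / 2 :=
    lt_of_le_of_lt (mul_le_mul_of_nonneg_left
      (Finset.single_le_sum (fun j _ => div_nonneg hΔt (hΔx j).le) (Finset.mem_univ i)) hw) hCFL
  rw [mul_div_assoc', div_lt_iff₀ (hΔx i)] at hterm
  rw [PiLp.smul_apply, smul_eq_mul, abs_mul, abs_of_nonneg hΔt]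
  nlinarith [hv i, abs_nonneg (v i)]

lemma node_add_mem_cell_iff {v : Euc d} (hv : ∀ i, |v i| < Δx i / 2)
    (L K : Fin d → ℤ) : node Δx L + v ∈ cell Δx K ↔ L = K := by
  simp only [cell, Set.mem_ofPred_eq, PiLp.add_apply, node_apply]
  constructor
  · intro h
    funext i
    obtain ⟨hlo, hhi⟩ := h i
    obtain ⟨hv₁, hv₂⟩ := abs_lt.mp (hv i)
    have h₁ : (K i : ℝ) < L i + 1 := by nlinarith
    have h₂ : (L i : ℝ) < K i + 1 := by nlinarith
    have : K i < L i + 1 := by exact_mod_cast h₁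
    have : L i < K i + 1 := by exact_mod_cast h₂
    omega
  · rintro rfl i
    obtain ⟨hv₁, hv₂⟩ := abs_lt.mp (hv i)
    constructor <;> linarith

lemma interpWeight_node_add {v : Euc d} (hv : ∀ i, |v i| < Δx i / 2)
    (J L : Fin d → ℤ) :
    interpWeight Δx J (node Δx L + v) =
      (if L = J then 1 - ∑ i, |v i| / Δx i else 0)
        + ∑ i : Fin d,
          ((if L = J - Pi.single i 1 then pos (v i) / Δx i else 0)
            + (if L = J + Pi.single i 1 then neg (v i) / Δx i else 0)) := by
  simp +contextual [interpWeight, node_add_mem_cell_iff hv]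

end Mesh

theorem stmt12_general {d : ℕ} (Δx : Fin d → ℝ) (hΔx : ∀ i, 0 < Δx i)
    (Δt : ℝ) (hΔt : 0 < Δt) (winf : ℝ)
    (hCFL : winf * ∑ i, Δt / Δx i < 1 / 2)
    (ρ : (Fin d → ℤ) → ℝ)
    (a : (Fin d → ℤ) → Euc d) (ha : ∀ L i, |a L i| ≤ winf)
    (ρ' : (Fin d → ℤ) → ℝ)
    (hρ' : ∀ J, ρ' J = ρ J - ∑ i : Fin d, (Δt / Δx i) *
      (pos (a J i) * ρ J - neg (a (J + Pi.single i 1) i) * ρ (J + Pi.single i 1)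
        - pos (a (J - Pi.single i 1) i) * ρ (J - Pi.single i 1) + neg (a J i) * ρ J)) :
    ∀ J : Fin d → ℤ,
      ρ' J = ∑' L : Fin d → ℤ, ρ L * interpWeight Δx J (node Δx L + Δt • a L) := by
  intro J
  have hsmall L := abs_smul_apply_lt_half_of_cfl hΔx hΔt.le hCFL (ha L)
  have hsum : HasSum (fun L => ρ L * interpWeight Δx J (node Δx L + Δt • a L))
      (ρ J * (1 - ∑ i, |(Δt • a J) i| / Δx i)
        + ∑ i : Fin d, (ρ (J - Pi.single i 1) * (pos ((Δt • a (J - Pi.single i 1)) i) / Δx i)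
          + ρ (J + Pi.single i 1) * (neg ((Δt • a (J + Pi.single i 1)) i) / Δx i))) := by
    simp only [interpWeight_node_add (hsmall _), mul_add, Finset.mul_sum]
    exact (hasSum_mul_ite_eq _ _ _).add (hasSum_sum fun i _ =>
      (hasSum_mul_ite_eq _ _ _).add (hasSum_mul_ite_eq _ _ _))
  rw [hsum.tsum_eq, hρ' J]
  simp only [PiLp.smul_apply, smul_eq_mul, abs_mul, abs_of_pos hΔt, pos_mul_of_nonneg hΔt.le,
    neg_mul_of_nonneg hΔt.le, abs_eq_pos_add_neg]
  rw [mul_sub, mul_one, Finset.mul_sum, sub_add, ← Finset.sum_sub_distrib]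
  exact congrArg _ (Finset.sum_congr rfl fun i _ => by ring)

/-- The upwind scheme rewrites through the interpolation weights:
`ρ'_J = Σ_L ρ_L α_J(x_L + Δt a_L)`. -/
theorem stmt12 {d : ℕ} (hd : 1 ≤ d) (Δx : Fin d → ℝ) (hΔx : ∀ i, 0 < Δx i)
    (Δt : ℝ) (hΔt : 0 < Δt) (winf : ℝ) (hwinf : 0 ≤ winf)
    (hCFL : winf * ∑ i, Δt / Δx i < 1 / 2)
    (ρ : (Fin d → ℤ) → ℝ) (hρ : Summable ρ)
    (a : (Fin d → ℤ) → Euc d) (ha : ∀ L i, |a L i| ≤ winf)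
    (ρ' : (Fin d → ℤ) → ℝ)
    (hρ' : ∀ J, ρ' J = ρ J - ∑ i : Fin d, (Δt / Δx i) *
      (pos (a J i) * ρ J - neg (a (J + Pi.single i 1) i) * ρ (J + Pi.single i 1)
        - pos (a (J - Pi.single i 1) i) * ρ (J - Pi.single i 1) + neg (a J i) * ρ J)) :
    ∀ J : Fin d → ℤ,
      ρ' J = ∑' L : Fin d → ℤ, ρ L * interpWeight Δx J (node Δx L + Δt • a L) :=
  stmt12_general Δx hΔx Δt hΔt winf hCFL ρ a ha ρ' hρ'
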